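/- arXiv:2506.22651 — 5 statements merged into one kernel-verified Lean document; each statement's English description precedes it below -/
import Mathlib

section
/- Let H be an order in a definite rational quaternion algebra A that is a left principal ideal domain, let θ ∈ H be primitive (not divisible by any rational integer other than ±1), and let m be a positive integer dividing the reduced norm N(θ). Then θ has a right divisor γ ∈ H with N(γ) = m, and γ is unique up to left associates (multiplication on the left by a unit of H). -/
/-!
Elements of an order are integral over `ℤ`, so by Gauss's lemma their reduced characteristic
polynomial `X² - tr(x) X + N(x)` has integer coefficients; in particular `H` is stable under
conjugation and `N` takes values in `ℕ` on `H`.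

For a prime `p ∣ N(θ)` the left ideal `Hθ + Hp` is principal, say `Hγ`, and `p = δγ` forces
`N(γ) ∈ {1, p, p²}`. If `N(γ) = 1` then `γ̄γ = 1`, and multiplying `γ = ξθ + ζp` on the right by
`θ̄` shows `p ∣ θ̄`; if `N(γ) = p²` then `δ` has norm `1` and `γ = pδ̄`, so `p ∣ θ`. Primitivity
excludes both, hence `N(γ) = p` and `θ = εγ` with `ε` primitive of norm `N(θ)/p`. Peeling off the
primes of `m` one at a time yields a right divisor `γ₀` of `θ` of norm `m` with
`γ₀ ∈ Hθ + Hm`. If `γ` is any right divisor of `θ` of norm `m`, then `m = γ̄γ` and `θ` both lie in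
`Hγ`, so `γ₀ = kγ` with `N(k) = 1`, i.e. `k` is a unit with inverse `k̄`.
-/

open Quaternion

/-- Reduced norm on the definite quaternion algebra `(−a,−b / ℚ)`. -/
def qN (a b : ℚ) (x : ℍ[ℚ, -a, -b]) : ℚ := (x * star x).re

/-- `H` is an order: finitely generated as an additive group, and a full lattice. -/
def IsOrder (a b : ℚ) (H : Subring ℍ[ℚ, -a, -b]) : Prop :=
  H.toAddSubgroup.FG ∧
    ∀ x : ℍ[ℚ, -a, -b], ∃ n : ℕ, 0 < n ∧ (n : ℍ[ℚ, -a, -b]) * x ∈ H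

/-- `H` is a left principal ideal domain: every left ideal is principal. -/
def IsLeftPID (a b : ℚ) (H : Subring ℍ[ℚ, -a, -b]) : Prop :=
  ∀ I : Set ℍ[ℚ, -a, -b],
    (I ⊆ H ∧ (0 : ℍ[ℚ, -a, -b]) ∈ I ∧ (∀ x ∈ I, ∀ y ∈ I, x + y ∈ I) ∧
      (∀ h ∈ H, ∀ x ∈ I, h * x ∈ I)) →
    ∃ γ ∈ H, I = {x | ∃ h ∈ H, x = h * γ}

open Polynomial in
theorem IsIntegral.exists_int_eq_minpoly_coeff {B : Type*} [Ring B] [Algebra ℚ B] {x : B}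
    (hx : IsIntegral ℤ x) (n : ℕ) : ∃ z : ℤ, (minpoly ℚ x).coeff n = z := by
  have hxℚ : IsIntegral ℚ x := hx.tower_top
  obtain ⟨f, hf, hfx⟩ := hx
  have hdvd : minpoly ℚ x ∣ f.map (algebraMap ℤ ℚ) :=
    minpoly.dvd ℚ x (by rwa [aeval_map_algebraMap, aeval_def])
  obtain ⟨c, hc⟩ := (lifts_iff_coeff_lifts _).mp
    (integralClosure.mem_lifts_of_monic_of_dvd_map ℚ hf (minpoly.monic hxℚ) hdvd) n
  obtain ⟨z, hz⟩ := IsIntegrallyClosed.isIntegral_iff.mp c.2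
  exact ⟨z, hc.symm.trans (by rw [← eq_intCast (algebraMap ℤ ℚ), hz]; rfl)⟩

theorem Subring.isIntegral_of_fg_of_mem {B : Type*} [Ring B] {H : Subring B}
    (hH : H.toAddSubgroup.FG) {x : B} (hx : x ∈ H) : IsIntegral ℤ x :=
  IsIntegral.of_mem_of_fg (subalgebraOfSubring H)
    ((Submodule.fg_iff_addSubgroup_fg _).mpr hH) x hx

namespace QuaternionAlgebra

open Polynomial

variable {a b : ℚ}

theorem coe_qN_eq_mul_star (x : ℍ[ℚ, -a, -b]) : (qN a b x : ℍ[ℚ, -a, -b]) = x * star x :=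
  (mul_star_eq_coe x).symm

theorem coe_qN_eq_star_mul (x : ℍ[ℚ, -a, -b]) : (qN a b x : ℍ[ℚ, -a, -b]) = star x * x := by
  rw [star_comm_self', coe_qN_eq_mul_star]

theorem qN_mul (x y : ℍ[ℚ, -a, -b]) : qN a b (x * y) = qN a b x * qN a b y := by
  apply coe_injective
  rw [coe_mul, coe_qN_eq_mul_star (x * y), star_mul, mul_assoc x, ← mul_assoc y,
    ← coe_qN_eq_mul_star y, (coe_commute (qN a b y) (star x)).eq, ← mul_assoc,
    ← coe_qN_eq_mul_star x]

theorem qN_coe (q : ℚ) : qN a b (q : ℍ[ℚ, -a, -b]) = q ^ 2 := by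
  simp [qN, sq]

theorem qN_natCast (n : ℕ) : qN a b (n : ℍ[ℚ, -a, -b]) = n ^ 2 := by
  rw [← coe_natCast, qN_coe]

theorem qN_eq (x : ℍ[ℚ, -a, -b]) :
    qN a b x = x.re ^ 2 + a * x.imI ^ 2 + b * x.imJ ^ 2 + a * b * x.imK ^ 2 := by
  simp [qN, re_mul]; ring

theorem qN_nonneg (ha : 0 < a) (hb : 0 < b) (x : ℍ[ℚ, -a, -b]) : 0 ≤ qN a b x := by
  rw [qN_eq]; positivity

theorem mem_unitary_iff_qN_eq_one {x : ℍ[ℚ, -a, -b]} :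
    x ∈ unitary ℍ[ℚ, -a, -b] ↔ qN a b x = 1 := by
  rw [Unitary.mem_iff, star_comm_self', and_self, ← coe_qN_eq_mul_star, ← coe_one, coe_inj]

noncomputable def reducedCharpoly (x : ℍ[ℚ, -a, -b]) : ℚ[X] :=
  X ^ 2 - C (2 * x.re) * X + C (qN a b x)

theorem reducedCharpoly_monic (x : ℍ[ℚ, -a, -b]) : (reducedCharpoly x).Monic := by
  unfold reducedCharpoly; monicity!

theorem degree_reducedCharpoly (x : ℍ[ℚ, -a, -b]) : (reducedCharpoly x).degree = 2 := by
  unfold reducedCharpoly; compute_degree!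

theorem coeff_reducedCharpoly_zero (x : ℍ[ℚ, -a, -b]) :
    (reducedCharpoly x).coeff 0 = qN a b x := by
  simp [reducedCharpoly]

theorem coeff_reducedCharpoly_one (x : ℍ[ℚ, -a, -b]) :
    (reducedCharpoly x).coeff 1 = -(2 * x.re) := by
  simp [reducedCharpoly]

theorem aeval_reducedCharpoly (x : ℍ[ℚ, -a, -b]) : aeval x (reducedCharpoly x) = 0 := by
  have htr : ((2 * x.re : ℚ) : ℍ[ℚ, -a, -b]) = x + star x := by simp [self_add_star']
  rw [reducedCharpoly, map_add, map_sub, map_mul, map_pow, aeval_X, aeval_C, aeval_C,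
    coe_algebraMap, htr, coe_qN_eq_mul_star, add_mul, star_comm_self']
  noncomm_ring

theorem minpoly_eq_reducedCharpoly {x : ℍ[ℚ, -a, -b]} (hx : IsIntegral ℚ x)
    (hx_scalar : x ∉ (algebraMap ℚ ℍ[ℚ, -a, -b]).range) : minpoly ℚ x = reducedCharpoly x := by
  refine (minpoly.unique_of_degree_le_degree_minpoly ℚ x (reducedCharpoly_monic x)
    (aeval_reducedCharpoly x) ?_).symm
  rw [degree_reducedCharpoly, degree_eq_natDegree (minpoly.ne_zero hx)]
  exact_mod_cast (minpoly.two_le_natDegree_iff hx).mpr hx_scalar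

theorem exists_int_two_re_and_qN {x : ℍ[ℚ, -a, -b]} (hx : IsIntegral ℤ x) :
    (∃ z : ℤ, 2 * x.re = z) ∧ ∃ z : ℤ, qN a b x = z := by
  by_cases hx_scalar : x ∈ (algebraMap ℚ ℍ[ℚ, -a, -b]).range
  · obtain ⟨q, rfl⟩ := hx_scalar
    obtain ⟨z, hz⟩ := hx.exists_int_eq_minpoly_coeff 0
    rw [minpoly.eq_X_sub_C, coeff_sub, coeff_X_zero, coeff_C_zero, zero_sub, neg_eq_iff_eq_neg]
      at hz
    rw [coe_algebraMap, qN_coe, re_coe, hz]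
    exact ⟨⟨-2 * z, by push_cast; ring⟩, ⟨z ^ 2, by push_cast; ring⟩⟩
  · have hmin := minpoly_eq_reducedCharpoly hx.tower_top hx_scalar
    obtain ⟨z₁, hz₁⟩ := hx.exists_int_eq_minpoly_coeff 1
    obtain ⟨z₀, hz₀⟩ := hx.exists_int_eq_minpoly_coeff 0
    rw [hmin, coeff_reducedCharpoly_one] at hz₁
    rw [hmin, coeff_reducedCharpoly_zero] at hz₀
    exact ⟨⟨-z₁, by push_cast; linarith⟩, ⟨z₀, hz₀⟩⟩

variable {H : Subring ℍ[ℚ, -a, -b]}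

theorem star_mem_of_fg (hH : H.toAddSubgroup.FG) {x : ℍ[ℚ, -a, -b]} (hx : x ∈ H) :
    star x ∈ H := by
  obtain ⟨⟨z, hz⟩, -⟩ := exists_int_two_re_and_qN (Subring.isIntegral_of_fg_of_mem hH hx)
  have hstar : star x = (z : ℍ[ℚ, -a, -b]) - x := by
    rw [star_eq_two_re_sub, zero_mul, add_zero, hz, coe_intCast]
  rw [hstar]
  exact H.sub_mem (intCast_mem H z) hx

theorem exists_nat_qN_eq_of_fg (ha : 0 < a) (hb : 0 < b) (hH : H.toAddSubgroup.FG)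
    {x : ℍ[ℚ, -a, -b]} (hx : x ∈ H) : ∃ n : ℕ, qN a b x = n := by
  obtain ⟨-, z, hz⟩ := exists_int_two_re_and_qN (Subring.isIntegral_of_fg_of_mem hH hx)
  have hz0 : 0 ≤ z := by exact_mod_cast hz ▸ qN_nonneg ha hb x
  exact ⟨z.toNat, by rw [hz]; exact_mod_cast (Int.toNat_of_nonneg hz0).symm⟩

theorem _root_.IsLeftPID.exists_right_gcd (hPID : IsLeftPID a b H) {x y : ℍ[ℚ, -a, -b]}
    (hx : x ∈ H) (hy : y ∈ H) :
    ∃ γ ∈ H, (∃ ε ∈ H, x = ε * γ) ∧ (∃ δ ∈ H, y = δ * γ) ∧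
      ∃ ξ ∈ H, ∃ ζ ∈ H, γ = ξ * x + ζ * y := by
  set I : Set ℍ[ℚ, -a, -b] := {z | ∃ ξ ∈ H, ∃ ζ ∈ H, z = ξ * x + ζ * y}
  have hI : I ⊆ H ∧ (0 : ℍ[ℚ, -a, -b]) ∈ I ∧ (∀ z ∈ I, ∀ w ∈ I, z + w ∈ I) ∧
      ∀ h ∈ H, ∀ z ∈ I, h * z ∈ I := by
    refine ⟨?_, ⟨0, H.zero_mem, 0, H.zero_mem, by simp⟩, ?_, ?_⟩
    · rintro _ ⟨ξ, hξ, ζ, hζ, rfl⟩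
      exact H.add_mem (H.mul_mem hξ hx) (H.mul_mem hζ hy)
    · rintro _ ⟨ξ, hξ, ζ, hζ, rfl⟩ _ ⟨ξ', hξ', ζ', hζ', rfl⟩
      exact ⟨ξ + ξ', H.add_mem hξ hξ', ζ + ζ', H.add_mem hζ hζ', by noncomm_ring⟩
    · rintro h hh _ ⟨ξ, hξ, ζ, hζ, rfl⟩
      exact ⟨h * ξ, H.mul_mem hh hξ, h * ζ, H.mul_mem hh hζ, by noncomm_ring⟩
  obtain ⟨γ, hγ, hIγ⟩ := hPID I hI
  have hxI : x ∈ I := ⟨1, H.one_mem, 0, H.zero_mem, by simp⟩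
  have hyI : y ∈ I := ⟨0, H.zero_mem, 1, H.one_mem, by simp⟩
  have hγI : γ ∈ I := hIγ ▸ ⟨1, H.one_mem, (one_mul γ).symm⟩
  rw [hIγ] at hxI hyI
  exact ⟨γ, hγ, hxI, hyI, hγI⟩

def IsPrimitiveIn (H : Subring ℍ[ℚ, -a, -b]) (θ : ℍ[ℚ, -a, -b]) : Prop :=
  ∀ n : ℤ, (∃ h ∈ H, θ = (n : ℍ[ℚ, -a, -b]) * h) → n = 1 ∨ n = -1

theorem IsPrimitiveIn.not_exists_natCast_mul {θ : ℍ[ℚ, -a, -b]} (hθ : IsPrimitiveIn H θ)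
    {p : ℕ} (hp : 2 ≤ p) : ¬ ∃ w ∈ H, θ = p * w := fun hw => by
  have := hθ p (by exact_mod_cast hw)
  omega

theorem IsPrimitiveIn.of_mul_right {ε γ : ℍ[ℚ, -a, -b]} (h : IsPrimitiveIn H (ε * γ))
    (hγ : γ ∈ H) : IsPrimitiveIn H ε := by
  rintro n ⟨w, hw, rfl⟩
  exact h n ⟨w * γ, H.mul_mem hw hγ, mul_assoc _ _ _⟩

theorem exists_natCast_mul_of_qN_mem_span_eq_one (hH : H.toAddSubgroup.FG)
    {θ ξ ζ : ℍ[ℚ, -a, -b]} (hθ : θ ∈ H) (hξ : ξ ∈ H) (hζ : ζ ∈ H) {p k : ℕ}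
    (hθN : qN a b θ = p * k) (hN : qN a b (ξ * θ + ζ * p) = 1) : ∃ w ∈ H, θ = p * w := by
  set γ := ξ * θ + ζ * p
  have hγ : γ ∈ H := H.add_mem (H.mul_mem hξ hθ) (H.mul_mem hζ (natCast_mem H p))
  set w := star γ * (ξ * k + ζ * star θ)
  have hw : w ∈ H := H.mul_mem (star_mem_of_fg hH hγ)
    (H.add_mem (H.mul_mem hξ (natCast_mem H k)) (H.mul_mem hζ (star_mem_of_fg hH hθ)))
  have hstar : star θ = p * w := calc
    star θ = star γ * γ * star θ := by rw [← coe_qN_eq_star_mul, hN, coe_one, one_mul]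
    _ = star γ * (ξ * (θ * star θ) + ζ * (p * star θ)) := by simp only [γ]; noncomm_ring
    _ = p * w := by
      rw [← coe_qN_eq_mul_star, hθN, coe_mul, coe_natCast, coe_natCast]
      simp only [w, ← nsmul_eq_mul, mul_smul_comm, mul_add]
  refine ⟨star w, star_mem_of_fg hH hw, ?_⟩
  rw [← star_star θ, hstar, star_mul, star_natCast, Nat.cast_comm]

theorem exists_natCast_mul_of_qN_eq_sq (hH : H.toAddSubgroup.FG) {θ ε γ δ : ℍ[ℚ, -a, -b]}
    (hε : ε ∈ H) (hδ : δ ∈ H) {p : ℕ} (hp : p ≠ 0) (hθ_eq : θ = ε * γ)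
    (hp_eq : (p : ℍ[ℚ, -a, -b]) = δ * γ) (hγN : qN a b γ = p ^ 2) : ∃ w ∈ H, θ = p * w := by
  have hδN : qN a b δ = 1 := by
    have h := qN_mul δ γ
    rw [← hp_eq, qN_natCast, hγN] at h
    have hp2 : (p : ℚ) ^ 2 ≠ 0 := by positivity
    exact (mul_eq_right₀ hp2).mp h.symm
  have hγ_eq : γ = p * star δ := calc
    γ = star δ * δ * γ := by rw [← coe_qN_eq_star_mul, hδN, coe_one, one_mul]
    _ = star δ * p := by rw [mul_assoc, ← hp_eq]
    _ = p * star δ := (Nat.cast_comm _ _).symm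
  exact ⟨ε * star δ, H.mul_mem hε (star_mem_of_fg hH hδ),
    by rw [hθ_eq, hγ_eq, ← mul_assoc, ← Nat.cast_comm, mul_assoc]⟩

theorem exists_right_divisor_of_prime (ha : 0 < a) (hb : 0 < b) (hH : H.toAddSubgroup.FG)
    (hPID : IsLeftPID a b H) {θ : ℍ[ℚ, -a, -b]} (hθ : θ ∈ H)
    (hprim : IsPrimitiveIn H θ) {p k : ℕ} (hp : p.Prime) (hθN : qN a b θ = p * k) :
    ∃ γ ∈ H, qN a b γ = p ∧ (∃ ε ∈ H, θ = ε * γ) ∧ ∃ ξ ∈ H, ∃ ζ ∈ H, γ = ξ * θ + ζ * p := by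
  obtain ⟨γ, hγ, ⟨ε, hε, hθ_eq⟩, ⟨δ, hδ, hp_eq⟩, ξ, hξ, ζ, hζ, hγ_eq⟩ :=
    hPID.exists_right_gcd hθ (natCast_mem H p)
  refine ⟨γ, hγ, ?_, ⟨ε, hε, hθ_eq⟩, ξ, hξ, ζ, hζ, hγ_eq⟩
  obtain ⟨n, hn⟩ := exists_nat_qN_eq_of_fg ha hb hH hγ
  obtain ⟨d, hd⟩ := exists_nat_qN_eq_of_fg ha hb hH hδ
  have hdn : d * n = p ^ 2 := by
    have h := qN_mul δ γ
    rw [← hp_eq, qN_natCast, hd, hn] at h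
    exact_mod_cast h.symm
  obtain ⟨i, hi, rfl⟩ := (Nat.dvd_prime_pow hp).mp (Dvd.intro_left d hdn)
  have hp_not_dvd := hprim.not_exists_natCast_mul hp.two_le
  interval_cases i
  · exact absurd (exists_natCast_mul_of_qN_mem_span_eq_one hH hθ hξ hζ hθN
      (by rw [← hγ_eq, hn]; simp)) hp_not_dvd
  · simpa using hn
  · exact absurd (exists_natCast_mul_of_qN_eq_sq hH hε hδ hp.ne_zero hθ_eq hp_eq
      (by rw [hn]; push_cast; rfl)) hp_not_dvd

theorem exists_right_divisor (ha : 0 < a) (hb : 0 < b) (hH : H.toAddSubgroup.FG)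
    (hPID : IsLeftPID a b H) {m : ℕ} (hm : m ≠ 0) {θ : ℍ[ℚ, -a, -b]} (hθ : θ ∈ H)
    (hprim : IsPrimitiveIn H θ) {n : ℕ} (hθN : qN a b θ = n) (hmn : m ∣ n) :
    ∃ γ ∈ H, qN a b γ = m ∧ (∃ ε ∈ H, θ = ε * γ) ∧ ∃ ξ ∈ H, ∃ ζ ∈ H, γ = ξ * θ + ζ * m := by
  induction m using UniqueFactorizationMonoid.induction_on_prime generalizing θ n with
  | h₁ => exact absurd rfl hm
  | h₂ u hu =>
    rw [Nat.isUnit_iff.mp hu]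
    exact ⟨1, H.one_mem, by simpa using qN_natCast (a := a) (b := b) 1,
      ⟨θ, hθ, (mul_one θ).symm⟩, 0, H.zero_mem, 1, H.one_mem, by simp⟩
  | h₃ m p hm' hp ih =>
    obtain ⟨t, rfl⟩ := hmn
    obtain ⟨γₚ, hγₚ, hγₚN, ⟨ε, hε, hθ_eq⟩, ξ, hξ, ζ, hζ, hγₚ_eq⟩ :=
      exists_right_divisor_of_prime ha hb hH hPID hθ hprim (Nat.prime_iff.mpr hp)
        (k := m * t) (by rw [hθN]; push_cast; ring)
    have hεN : qN a b ε = (m * t : ℕ) := by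
      have h := qN_mul ε γₚ
      rw [← hθ_eq, hθN, hγₚN] at h
      have hp0 : (p : ℚ) ≠ 0 := by exact_mod_cast hp.ne_zero
      push_cast at h ⊢
      exact mul_right_cancel₀ hp0 (by linear_combination -h)
    obtain ⟨γ, hγ, hγN, ⟨ε', hε', hε_eq⟩, ξ', hξ', ζ', hζ', hγ_eq⟩ :=
      ih hm' hε (IsPrimitiveIn.of_mul_right (hθ_eq ▸ hprim) hγₚ) hεN (dvd_mul_right m t)
    refine ⟨γ * γₚ, H.mul_mem hγ hγₚ, by rw [qN_mul, hγN, hγₚN]; push_cast; ring,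
      ⟨ε', hε', by rw [hθ_eq, hε_eq, mul_assoc]⟩, ξ' + ζ' * (m * ξ),
      H.add_mem hξ' (H.mul_mem hζ' (H.mul_mem (natCast_mem H m) hξ)), ζ' * ζ,
      H.mul_mem hζ' hζ, ?_⟩
    calc γ * γₚ = ξ' * (ε * γₚ) + ζ' * (m * γₚ) := by rw [hγ_eq]; noncomm_ring
      _ = ξ' * θ + ζ' * (m * (ξ * θ + ζ * p)) := by rw [← hθ_eq, ← hγₚ_eq]
      _ = (ξ' + ζ' * (m * ξ)) * θ + ζ' * ζ * (p * m : ℕ) := by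
        rw [Nat.cast_mul, Nat.cast_comm p]
        simp only [← nsmul_eq_mul, mul_smul_comm, smul_mul_assoc, mul_add, add_mul, add_assoc,
          mul_assoc]

theorem exists_unitary_mul_eq_of_mem_span (hH : H.toAddSubgroup.FG)
    {θ γ₀ γ ε ξ ζ : ℍ[ℚ, -a, -b]} (hγ : γ ∈ H) (hε : ε ∈ H) (hξ : ξ ∈ H) (hζ : ζ ∈ H)
    {m : ℕ} (hm : m ≠ 0) (hγ₀_eq : γ₀ = ξ * θ + ζ * m) (hγ₀N : qN a b γ₀ = m)
    (hθ_eq : θ = ε * γ) (hγN : qN a b γ = m) : ∃ k ∈ H, k ∈ unitary ℍ[ℚ, -a, -b] ∧ γ₀ = k * γ := by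
  have hm_eq : (m : ℍ[ℚ, -a, -b]) = star γ * γ := by
    rw [← coe_qN_eq_star_mul, hγN, coe_natCast]
  have hk_eq : γ₀ = (ξ * ε + ζ * star γ) * γ := by
    rw [hγ₀_eq, hθ_eq, hm_eq]; noncomm_ring
  refine ⟨ξ * ε + ζ * star γ,
    H.add_mem (H.mul_mem hξ hε) (H.mul_mem hζ (star_mem_of_fg hH hγ)),
    mem_unitary_iff_qN_eq_one.mpr ?_, hk_eq⟩
  have h := qN_mul (ξ * ε + ζ * star γ) γ
  rw [← hk_eq, hγ₀N, hγN] at h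
  have hm0 : (m : ℚ) ≠ 0 := by exact_mod_cast hm
  exact (mul_eq_right₀ hm0).mp h.symm

end QuaternionAlgebra

open QuaternionAlgebra

theorem stmt_0 (a b : ℚ) (ha : 0 < a) (hb : 0 < b)
    (H : Subring ℍ[ℚ, -a, -b]) (hH : IsOrder a b H) (hPID : IsLeftPID a b H)
    (θ : ℍ[ℚ, -a, -b]) (hθ : θ ∈ H)
    (hprim : ∀ n : ℤ, (∃ h ∈ H, θ = (n : ℍ[ℚ, -a, -b]) * h) → n = 1 ∨ n = -1)
    (m : ℕ) (hm : 0 < m) (hdvd : ∃ t : ℤ, qN a b θ = (m : ℚ) * t) :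
    (∃ γ ∈ H, qN a b γ = m ∧ ∃ ε ∈ H, θ = ε * γ) ∧
      ∀ γ₁ ∈ H, ∀ γ₂ ∈ H,
        (qN a b γ₁ = m ∧ ∃ ε ∈ H, θ = ε * γ₁) →
        (qN a b γ₂ = m ∧ ∃ ε ∈ H, θ = ε * γ₂) →
        ∃ u ∈ H, (∃ v ∈ H, u * v = 1 ∧ v * u = 1) ∧ γ₁ = u * γ₂ := by
  obtain ⟨n, hθN⟩ := exists_nat_qN_eq_of_fg ha hb hH.1 hθ
  obtain ⟨t, ht⟩ := hdvd
  have hmn : m ∣ n := Int.natCast_dvd_natCast.mp ⟨t, by exact_mod_cast hθN.symm.trans ht⟩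
  obtain ⟨γ₀, hγ₀, hγ₀N, hθ₀, ξ, hξ, ζ, hζ, hγ₀_eq⟩ :=
    exists_right_divisor ha hb hH.1 hPID hm.ne' hθ hprim hθN hmn
  refine ⟨⟨γ₀, hγ₀, hγ₀N, hθ₀⟩, ?_⟩
  rintro γ₁ hγ₁ γ₂ hγ₂ ⟨hγ₁N, ε₁, hε₁, hθ₁⟩ ⟨hγ₂N, ε₂, hε₂, hθ₂⟩
  obtain ⟨k₁, hk₁, hk₁u, hγ₀₁⟩ :=
    exists_unitary_mul_eq_of_mem_span hH.1 hγ₁ hε₁ hξ hζ hm.ne' hγ₀_eq hγ₀N hθ₁ hγ₁N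
  obtain ⟨k₂, hk₂, hk₂u, hγ₀₂⟩ :=
    exists_unitary_mul_eq_of_mem_span hH.1 hγ₂ hε₂ hξ hζ hm.ne' hγ₀_eq hγ₀N hθ₂ hγ₂N
  have hu : star k₁ * k₂ ∈ unitary ℍ[ℚ, -a, -b] := mul_mem (Unitary.star_mem hk₁u) hk₂u
  have hu_mem : star k₁ * k₂ ∈ H := H.mul_mem (star_mem_of_fg hH.1 hk₁) hk₂
  refine ⟨star k₁ * k₂, hu_mem, ⟨star (star k₁ * k₂), star_mem_of_fg hH.1 hu_mem,
    Unitary.mul_star_self_of_mem hu, Unitary.star_mul_self_of_mem hu⟩, ?_⟩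
  rw [mul_assoc, ← hγ₀₂, hγ₀₁, ← mul_assoc, Unitary.star_mul_self_of_mem hk₁u, one_mul]
end

section
/- Let H be an order in a definite rational quaternion algebra A, θ ∈ H, m a positive integer dividing N(θ), and suppose the left ideal Hθ + Hm is principal, generated by γ. If θ is primitive, then N(γ) = m and γ is a right divisor of θ. -/
open Quaternion

/-!
Since `θ` and `m` lie in `Hγ`, write `θ = εγ` and `m = δγ`. Elements of an order have integral
trace and norm, so `H` is stable under conjugation and `N(γ) = γ̄γ ∈ Hγ = Hθ + Hm` is an
integer `k > 0`. Writing `k = xθ + ym` and multiplying on the right by `θ̄`, the hypothesis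
`m ∣ N(θ)` gives `k θ̄ ∈ mH`, hence `k θ ∈ mH`, and primitivity of `θ` forces `m ∣ k`, say
`k = ms`. Then `m γ̄ = δ γ γ̄ = m s δ`, so `γ = s δ̄` and `θ = s (ε δ̄)`; primitivity again
gives `s = ±1`, and `k > 0` gives `s = 1`.
-/

section Primitive

variable {R : Type*} [Ring R]

def IsPrimitive (H : Subring R) (θ : R) : Prop :=
  ∀ n : ℤ, (∃ h ∈ H, θ = (n : R) * h) → n = 1 ∨ n = -1

theorem intCast_mul_left_cancel [IsAddTorsionFree R] {n : ℤ} (hn : n ≠ 0) {x y : R}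
    (h : (n : R) * x = n * y) : x = y :=
  zsmul_right_injective hn (by simpa only [zsmul_eq_mul] using h)

/-- With `d = gcd(k, m) = u k + v m` one gets `d θ = m (u h + v θ)`, so `m / d` divides `θ`. -/
theorem IsPrimitive.dvd_of_intCast_mul_eq [IsAddTorsionFree R] {H : Subring R} {θ : R}
    (hprim : IsPrimitive H θ) (hθ : θ ∈ H) {k m : ℤ} (hm : m ≠ 0) {h : R} (hh : h ∈ H)
    (heq : (k : R) * θ = m * h) : m ∣ k := by
  set d : ℤ := (Int.gcd k m : ℤ)
  set g : R := Int.gcdA k m * h + Int.gcdB k m * θ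
  have hd0 : d ≠ 0 := by simpa [d] using Int.gcd_ne_zero_right hm
  have hbezout : d = Int.gcdA k m * k + m * Int.gcdB k m := by
    rw [mul_comm _ k]; exact Int.gcd_eq_gcd_ab k m
  have hdθ : (d : R) * θ = m * g := by
    rw [hbezout]
    push_cast
    rw [add_mul, mul_assoc, mul_assoc, heq, ← mul_assoc, Int.cast_comm, mul_assoc, ← mul_add]
  obtain ⟨e, hme⟩ : d ∣ m := Int.gcd_dvd_right k m
  have hg : g ∈ H := add_mem (mul_mem (intCast_mem H _) hh) (mul_mem (intCast_mem H _) hθ)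
  have he : e = 1 ∨ e = -1 :=
    hprim e ⟨g, hg, intCast_mul_left_cancel hd0 (by rw [hdθ, hme]; push_cast; rw [mul_assoc])⟩
  have hdk : d ∣ k := Int.gcd_dvd_left k m
  rcases he with rfl | rfl <;> simpa [hme] using hdk

end Primitive

section QuaternionAlgebra

open Polynomial

variable {a b : ℚ}

instance {c₁ c₂ c₃ : ℚ} : IsAddTorsionFree ℍ[ℚ, c₁, c₂, c₃] := .of_module_rat _

theorem mul_star_eq_qN (x : ℍ[ℚ, -a, -b]) : x * star x = (qN a b x : ℍ[ℚ, -a, -b]) :=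
  QuaternionAlgebra.mul_star_eq_coe x

theorem star_mul_eq_qN (x : ℍ[ℚ, -a, -b]) : star x * x = (qN a b x : ℍ[ℚ, -a, -b]) := by
  rw [star_comm_self', mul_star_eq_qN]

theorem qN_coe (c : ℚ) : qN a b (c : ℍ[ℚ, -a, -b]) = c ^ 2 := by
  simp [qN, sq]

theorem qN_eq_weighted_sum_sq (x : ℍ[ℚ, -a, -b]) :
    qN a b x = x.re ^ 2 + a * x.imI ^ 2 + b * x.imJ ^ 2 + a * b * x.imK ^ 2 := by
  simp [qN, QuaternionAlgebra.re_mul]; ring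

theorem qN_pos (ha : 0 < a) (hb : 0 < b) {x : ℍ[ℚ, -a, -b]} (hx : x ≠ 0) : 0 < qN a b x := by
  rw [qN_eq_weighted_sum_sq]
  contrapose! hx
  have h₀ : 0 ≤ x.re ^ 2 := by positivity
  have h₁ : 0 ≤ a * x.imI ^ 2 := by positivity
  have h₂ : 0 ≤ b * x.imJ ^ 2 := by positivity
  have h₃ : 0 ≤ a * b * x.imK ^ 2 := by positivity
  ext
  · simpa using (by linarith : x.re ^ 2 = 0)
  · simpa [ha.ne'] using (by linarith : a * x.imI ^ 2 = 0)
  · simpa [hb.ne'] using (by linarith : b * x.imJ ^ 2 = 0)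
  · simpa [ha.ne', hb.ne'] using (by linarith : a * b * x.imK ^ 2 = 0)

noncomputable def reducedCharpoly (x : ℍ[ℚ, -a, -b]) : ℚ[X] :=
  X ^ 2 - C (2 * x.re) * X + C (qN a b x)

theorem reducedCharpoly_monic (x : ℍ[ℚ, -a, -b]) : (reducedCharpoly x).Monic := by
  unfold reducedCharpoly; monicity!

theorem reducedCharpoly_natDegree (x : ℍ[ℚ, -a, -b]) : (reducedCharpoly x).natDegree = 2 := by
  unfold reducedCharpoly; compute_degree!

theorem reducedCharpoly_coeff_zero (x : ℍ[ℚ, -a, -b]) :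
    (reducedCharpoly x).coeff 0 = qN a b x := by
  simp [reducedCharpoly]

theorem reducedCharpoly_coeff_one (x : ℍ[ℚ, -a, -b]) :
    (reducedCharpoly x).coeff 1 = -(2 * x.re) := by
  simp [reducedCharpoly]

theorem aeval_reducedCharpoly (x : ℍ[ℚ, -a, -b]) : aeval x (reducedCharpoly x) = 0 := by
  have h := mul_star_eq_qN x
  rw [QuaternionAlgebra.star_eq_two_re_sub, zero_mul, add_zero, mul_sub,
    ← QuaternionAlgebra.coe_commutes] at h
  simp only [reducedCharpoly, map_add, map_sub, map_mul, map_pow, aeval_X, aeval_C,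
    QuaternionAlgebra.coe_algebraMap, ← h]
  push_cast
  rw [sq]
  abel

theorem minpoly_eq_reducedCharpoly {x : ℍ[ℚ, -a, -b]} (hx : x ∉ (algebraMap ℚ _).range) :
    minpoly ℚ x = reducedCharpoly x := by
  have hint : IsIntegral ℚ x := .of_finite ℚ x
  refine (eq_of_monic_of_dvd_of_natDegree_le (minpoly.monic hint) (reducedCharpoly_monic x)
    (minpoly.dvd ℚ x (aeval_reducedCharpoly x)) ?_).symm
  rw [reducedCharpoly_natDegree]
  exact (minpoly.two_le_natDegree_iff hint).2 hx

/-- For non-scalar `x` the reduced characteristic polynomial is the minimal polynomial, which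
divides a monic integer polynomial, so Gauss's lemma puts its coefficients in `ℤ`. -/
theorem exists_intCast_two_re_and_qN_of_isIntegral {x : ℍ[ℚ, -a, -b]} (hx : IsIntegral ℤ x) :
    (∃ u : ℤ, 2 * x.re = u) ∧ ∃ v : ℤ, qN a b x = v := by
  by_cases hsc : x ∈ (algebraMap ℚ ℍ[ℚ, -a, -b]).range
  · obtain ⟨c, rfl⟩ := hsc
    obtain ⟨k, rfl⟩ := IsIntegrallyClosed.isIntegral_iff.mp
      ((isIntegral_algebraMap_iff (algebraMap ℚ _).injective).mp hx)
    refine ⟨⟨2 * k, by simp⟩, ⟨k ^ 2, ?_⟩⟩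
    rw [QuaternionAlgebra.coe_algebraMap, qN_coe]
    push_cast; rfl
  · obtain ⟨p, hpm, hp⟩ := hx
    have hdvd : reducedCharpoly x ∣ p.map (algebraMap ℤ ℚ) := by
      rw [← minpoly_eq_reducedCharpoly hsc]
      exact minpoly.dvd ℚ x (by rwa [aeval_map_algebraMap])
    obtain ⟨g, hg⟩ := IsIntegrallyClosed.eq_map_mul_C_of_dvd ℚ hpm hdvd
    rw [(reducedCharpoly_monic x).leadingCoeff, map_one, mul_one] at hg
    refine ⟨⟨-g.coeff 1, ?_⟩, ⟨g.coeff 0, ?_⟩⟩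
    · have := congrArg (coeff · 1) hg
      simp only [coeff_map, reducedCharpoly_coeff_one, algebraMap_int_eq, eq_intCast] at this
      push_cast; rw [this, neg_neg]
    · have := congrArg (coeff · 0) hg
      simp only [coeff_map, reducedCharpoly_coeff_zero, algebraMap_int_eq, eq_intCast] at this
      exact this.symm

theorem coe_mul_eq_natCast_mul_star {θ x y : ℍ[ℚ, -a, -b]} {c : ℚ} {m : ℕ} {t : ℤ}
    (hc : (c : ℍ[ℚ, -a, -b]) = x * θ + y * m) (hθ : qN a b θ = m * t) :
    (c : ℍ[ℚ, -a, -b]) * θ = m * star (x * t + y * star θ) := by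
  have h : (c : ℍ[ℚ, -a, -b]) * star θ = m * (x * t + y * star θ) := by
    rw [hc, add_mul, mul_assoc, mul_star_eq_qN, hθ, mul_assoc y, mul_add]
    push_cast
    rw [(Nat.cast_commute m x).left_comm, (Nat.cast_commute m y).left_comm]
  have := congrArg star h
  rwa [star_mul, star_mul, star_star, QuaternionAlgebra.star_coe, star_natCast,
    ← QuaternionAlgebra.coe_commutes, ← Nat.cast_comm] at this

theorem eq_intCast_mul_star_of_natCast_eq_mul {γ δ : ℍ[ℚ, -a, -b]} {m : ℕ} (hm : m ≠ 0)
    {s : ℤ} (hδ : (m : ℍ[ℚ, -a, -b]) = δ * γ) (hγ : qN a b γ = m * s) : γ = s * star δ := by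
  have h : ((m : ℤ) : ℍ[ℚ, -a, -b]) * star γ = (m : ℤ) * (s * δ) := by
    calc ((m : ℤ) : ℍ[ℚ, -a, -b]) * star γ = δ * (γ * star γ) := by
          rw [Int.cast_natCast, hδ, mul_assoc]
      _ = (m : ℤ) * (s * δ) := by
          rw [mul_star_eq_qN, hγ]
          push_cast
          rw [← mul_assoc, ← Int.cast_comm, ← Nat.cast_comm]
          exact (Nat.cast_commute m _).symm.left_comm δ
  have := congrArg star (intCast_mul_left_cancel (by exact_mod_cast hm) h)
  rwa [star_star, star_mul, star_intCast, ← Int.cast_comm] at this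

end QuaternionAlgebra

theorem Subring.isIntegral_of_fg {R : Type*} [Ring R] {H : Subring R} (hH : H.toAddSubgroup.FG)
    {x : R} (hx : x ∈ H) : IsIntegral ℤ x :=
  .of_mem_of_fg (subalgebraOfSubring H) (Submodule.fg_iff_addSubgroup_fg _ |>.mpr hH) x hx

section Order

variable {a b : ℚ} {H : Subring ℍ[ℚ, -a, -b]}

theorem star_mem_of_fg (hH : H.toAddSubgroup.FG) {x : ℍ[ℚ, -a, -b]} (hx : x ∈ H) :
    star x ∈ H := by
  obtain ⟨⟨u, hu⟩, -⟩ :=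
    exists_intCast_two_re_and_qN_of_isIntegral (Subring.isIntegral_of_fg hH hx)
  rw [QuaternionAlgebra.star_eq_two_re_sub, zero_mul, add_zero, hu,
    QuaternionAlgebra.coe_intCast]
  exact sub_mem (intCast_mem H u) hx

theorem exists_qN_eq_intCast_of_fg (hH : H.toAddSubgroup.FG) {x : ℍ[ℚ, -a, -b]} (hx : x ∈ H) :
    ∃ k : ℤ, qN a b x = k :=
  (exists_intCast_two_re_and_qN_of_isIntegral (Subring.isIntegral_of_fg hH hx)).2

end Order

theorem stmt_1 (a b : ℚ) (ha : 0 < a) (hb : 0 < b)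
    (H : Subring ℍ[ℚ, -a, -b]) (hH : IsOrder a b H)
    (θ : ℍ[ℚ, -a, -b]) (hθ : θ ∈ H)
    (m : ℕ) (hm : 0 < m) (hdvd : ∃ t : ℤ, qN a b θ = (m : ℚ) * t)
    (γ : ℍ[ℚ, -a, -b]) (hγ : γ ∈ H)
    (hgen : {x | ∃ α ∈ H, ∃ β ∈ H, x = α * θ + β * (m : ℍ[ℚ, -a, -b])} =
      {x | ∃ h ∈ H, x = h * γ})
    (hprim : ∀ n : ℤ, (∃ h ∈ H, θ = (n : ℍ[ℚ, -a, -b]) * h) → n = 1 ∨ n = -1) :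
    qN a b γ = m ∧ ∃ ε ∈ H, θ = ε * γ := by
  obtain ⟨hfg, -⟩ := hH
  obtain ⟨t, ht⟩ := hdvd
  have mem_gen (z : ℍ[ℚ, -a, -b]) := Set.ext_iff.mp hgen z
  obtain ⟨ε, hε, hθε⟩ := (mem_gen θ).mp ⟨1, H.one_mem, 0, H.zero_mem, by simp⟩
  obtain ⟨δ, hδ, hmδ⟩ := (mem_gen m).mp ⟨0, H.zero_mem, 1, H.one_mem, by simp⟩
  obtain ⟨x, hx, y, hy, hxy⟩ :=
    (mem_gen (qN a b γ)).mpr ⟨star γ, star_mem_of_fg hfg hγ, (star_mul_eq_qN γ).symm⟩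
  obtain ⟨k, hk⟩ := exists_qN_eq_intCast_of_fg hfg hγ
  have hγ0 : γ ≠ 0 := by
    rintro rfl
    simpa using hprim 0 ⟨0, H.zero_mem, by simp [hθε]⟩
  have hk0 : (0 : ℚ) < k := hk ▸ qN_pos ha hb hγ0
  have hw : x * t + y * star θ ∈ H :=
    add_mem (mul_mem hx (intCast_mem H t)) (mul_mem hy (star_mem_of_fg hfg hθ))
  obtain ⟨s, rfl⟩ : (m : ℤ) ∣ k := by
    refine IsPrimitive.dvd_of_intCast_mul_eq hprim hθ (by omega) (star_mem_of_fg hfg hw) ?_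
    rw [← QuaternionAlgebra.coe_intCast, ← hk, coe_mul_eq_natCast_mul_star hxy ht,
      Int.cast_natCast]
  have hγs := eq_intCast_mul_star_of_natCast_eq_mul hm.ne' hmδ (by rw [hk]; push_cast; rfl)
  have hs : s = 1 ∨ s = -1 := hprim s ⟨ε * star δ, mul_mem hε (star_mem_of_fg hfg hδ), by
    rw [hθε, hγs, (Int.cast_commute s ε).symm.left_comm]⟩
  obtain rfl : s = 1 := by
    rcases hs with rfl | rfl
    · rfl
    · push_cast at hk0; linarith [(Nat.cast_nonneg m : (0 : ℚ) ≤ m)]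
  exact ⟨by rw [hk]; push_cast; ring, ε, hε, hθε⟩
end

section
/- If an order H in a definite rational quaternion division algebra A satisfies the Dedekind–Hasse condition (for all ρ ∈ A \ H there exist α, β ∈ H with 0 < N(αρ − β) < 1), then H is a maximal order in A. -/
open Quaternion

/-!
Every element `x` of an order is integral over `ℤ`, hence so is its conjugate `x̄`; as `x` and `x̄`
commute, the norm `x x̄` is a rational number integral over `ℤ`, i.e. an integer. So no element of
an order has norm strictly between `0` and `1`. If an order `L` contained `H` and some `ρ ∉ H`, the
Dedekind–Hasse condition would produce `αρ − β ∈ L` of norm in `(0, 1)`.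
-/

open Polynomial

theorem Polynomial.star_aeval_int {B : Type*} [Ring B] [StarRing B] (p : ℤ[X]) (x : B) :
    star (aeval x p) = aeval (star x) p := by
  induction p using Polynomial.induction_on' with
  | add p q hp hq => simp only [map_add, star_add, hp, hq]
  | monomial n c =>
    simp only [aeval_monomial, algebraMap_int_eq, eq_intCast, star_mul, star_pow, star_intCast]
    exact (Int.cast_commute c _).symm.eq

theorem IsIntegral.star {B : Type*} [Ring B] [StarRing B] {x : B} (hx : IsIntegral ℤ x) :
    IsIntegral ℤ (star x) := by
  obtain ⟨p, hmonic, hp⟩ := hx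
  refine ⟨p, hmonic, ?_⟩
  rw [← aeval_def, ← star_aeval_int, aeval_def, hp, star_zero]

open scoped IsMulCommutative in
theorem IsIntegral.mul_of_commute {R B : Type*} [CommRing R] [Ring B] [Algebra R B] {x y : B}
    (hxy : Commute x y) (hx : IsIntegral R x) (hy : IsIntegral R y) : IsIntegral R (x * y) := by
  let S := Algebra.adjoin R ({x, y} : Set B)
  have : IsMulCommutative S := Algebra.isMulCommutative_adjoin R (by
    rintro u (rfl | rfl) v (rfl | rfl) <;> first | rfl | exact hxy.eq | exact hxy.eq.symm)
  have hxS : x ∈ S := Algebra.subset_adjoin (Set.mem_insert x _)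
  have hyS : y ∈ S := Algebra.subset_adjoin (Set.mem_insert_of_mem x rfl)
  have lift {z : B} (hz : z ∈ S) (h : IsIntegral R z) : IsIntegral R (⟨z, hz⟩ : S) :=
    (isIntegral_algHom_iff S.val Subtype.val_injective).mp h
  exact (isIntegral_algHom_iff S.val Subtype.val_injective).mpr ((lift hxS hx).mul (lift hyS hy))

theorem Subring.isIntegral_of_mem_of_fg {B : Type*} [Ring B] {L : Subring B}
    (hL : L.toAddSubgroup.FG) {x : B} (hx : x ∈ L) : IsIntegral ℤ x :=
  .of_mem_of_fg (subalgebraOfSubring L) ((Submodule.fg_iff_addSubgroup_fg _).mpr hL) x hx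

theorem QuaternionAlgebra.exists_re_mul_star_eq_intCast {c₁ c₂ c₃ : ℚ} {x : ℍ[ℚ, c₁, c₂, c₃]}
    (hx : IsIntegral ℤ x) : ∃ n : ℤ, (x * star x).re = n := by
  have hnorm : IsIntegral ℤ (algebraMap ℚ ℍ[ℚ, c₁, c₂, c₃] (x * star x).re) := by
    rw [coe_algebraMap, ← mul_star_eq_coe]
    exact hx.mul_of_commute (star_comm_self' x).symm hx.star
  rw [isIntegral_algebraMap_iff coe_injective] at hnorm
  obtain ⟨n, hn⟩ := IsIntegrallyClosed.isIntegral_iff.mp hnorm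
  exact ⟨n, hn.symm⟩

theorem IsOrder.one_le_qN_of_pos {a b : ℚ} {L : Subring ℍ[ℚ, -a, -b]} (hL : IsOrder a b L)
    {x : ℍ[ℚ, -a, -b]} (hx : x ∈ L) (hpos : 0 < qN a b x) : 1 ≤ qN a b x := by
  obtain ⟨n, hn⟩ :=
    QuaternionAlgebra.exists_re_mul_star_eq_intCast (Subring.isIntegral_of_mem_of_fg hL.1 hx)
  rw [qN, hn] at hpos ⊢
  exact_mod_cast (Int.cast_pos.mp hpos : 0 < n)

theorem stmt_4_general (a b : ℚ)
    (H : Subring ℍ[ℚ, -a, -b])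
    (hDH : ∀ ρ : ℍ[ℚ, -a, -b], ρ ∉ H →
      ∃ α ∈ H, ∃ β ∈ H, 0 < qN a b (α * ρ - β) ∧ qN a b (α * ρ - β) < 1) :
    ∀ L : Subring ℍ[ℚ, -a, -b], IsOrder a b L → H ≤ L → H = L := by
  intro L hL hHL
  refine le_antisymm hHL fun ρ hρ => ?_
  by_contra hρH
  obtain ⟨α, hα, β, hβ, hpos, hlt⟩ := hDH ρ hρH
  have hmem : α * ρ - β ∈ L := L.sub_mem (L.mul_mem (hHL hα) hρ) (hHL hβ)
  exact (hL.one_le_qN_of_pos hmem hpos).not_gt hlt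

theorem stmt_4 (a b : ℚ) (ha : 0 < a) (hb : 0 < b)
    (H : Subring ℍ[ℚ, -a, -b]) (hH : IsOrder a b H)
    (hDH : ∀ ρ : ℍ[ℚ, -a, -b], ρ ∉ H →
      ∃ α ∈ H, ∃ β ∈ H, 0 < qN a b (α * ρ - β) ∧ qN a b (α * ρ - β) < 1) :
    ∀ L : Subring ℍ[ℚ, -a, -b], IsOrder a b L → H ≤ L → H = L :=
  stmt_4_general a b H hDH
end

section
/- Let H = ℤ[1, v₁, v₂, v₃] be an order in A = (−a,−b/ℚ), a,b > 0, write vᵣ = a_{r,0} + a_{r,1}i + a_{r,2}j + a_{r,3}k, let M = max_{1≤r≤3, 0≤s≤3} |a_{r,s}|, d = (1+a)(1+b), and Q = ⌈2M(1+√(1+3d))⌉. If δ = d₀ + d₁v₁ + d₂v₂ + d₃v₃ with |d₀| ≤ p/2 and |dᵢ| < p/Q for i = 1,2,3, then N(δ/p) < 1. -/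
open Quaternion

/-!
Write `δ/p = e₀ + e₁v₁ + e₂v₂ + e₃v₃` with `|e₀| ≤ 1/2` and `|eᵢ| < 1/Q`. Every coordinate of
`e₁v₁ + e₂v₂ + e₃v₃` is smaller than `3u` in absolute value, where `u = M/Q`, so
`N(δ/p) < (1/2 + 3u)² + 9(a + b + ab)u² = 1/4 + 3u + 9du²`, and the choice of `Q` makes the right
hand side at most `1`.
-/

theorem qN_eq (a b : ℚ) (x : ℍ[ℚ, -a, -b]) :
    qN a b x = x.re ^ 2 + a * x.imI ^ 2 + b * x.imJ ^ 2 + a * b * x.imK ^ 2 := by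
  simp only [qN, QuaternionAlgebra.re_mul, QuaternionAlgebra.re_star, QuaternionAlgebra.imI_star,
    QuaternionAlgebra.imJ_star, QuaternionAlgebra.imK_star]
  ring

theorem qN_lt_of_abs_coords_lt {a b u : ℚ} (ha : 0 < a) (hb : 0 < b) {x : ℍ[ℚ, -a, -b]}
    (h₀ : |x.re| < 1 / 2 + 3 * u) (h₁ : |x.imI| < 3 * u) (h₂ : |x.imJ| < 3 * u)
    (h₃ : |x.imK| < 3 * u) : qN a b x < 1 / 4 + 3 * u + 9 * ((1 + a) * (1 + b)) * u ^ 2 := by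
  have sq_lt {y r : ℚ} (h : |y| < r) : y ^ 2 < r ^ 2 := sq_lt_sq' (abs_lt.mp h).1 (abs_lt.mp h).2
  rw [qN_eq]
  linarith [sq_lt h₀, mul_lt_mul_of_pos_left (sq_lt h₁) ha, mul_lt_mul_of_pos_left (sq_lt h₂) hb,
    mul_lt_mul_of_pos_left (sq_lt h₃) (mul_pos ha hb)]

/-- With `s = √(1 + 3d)`: `3u + 9du² = 3u (1 + (s - 1)(s + 1)u) ≤ 3u (s + 1)/2 ≤ 3/4`. -/
theorem quarter_add_le_one {d u : ℝ} (hd : 0 ≤ d) (hu : 0 ≤ u)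
    (h : 2 * u * (1 + √(1 + 3 * d)) ≤ 1) : 1 / 4 + 3 * u + 9 * d * u ^ 2 ≤ 1 := by
  set s := √(1 + 3 * d)
  have hs : s ^ 2 = 1 + 3 * d := Real.sq_sqrt (by linarith)
  have hs1 : 1 ≤ s := Real.one_le_sqrt.mpr (by linarith)
  nlinarith [mul_le_mul_of_nonneg_left h (mul_nonneg hu (sub_nonneg.mpr hs1))]

theorem quarter_add_le_one_of_le_natCast {M d : ℚ} {Q : ℕ} (hM : 0 ≤ M) (hd : 0 ≤ d)
    (hQ : 2 * (M : ℝ) * (1 + √(1 + 3 * (d : ℝ))) ≤ Q) :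
    1 / 4 + 3 * ((Q : ℚ)⁻¹ * M) + 9 * d * ((Q : ℚ)⁻¹ * M) ^ 2 ≤ 1 := by
  have hu : 2 * ((Q : ℝ)⁻¹ * M) * (1 + √(1 + 3 * (d : ℝ))) ≤ 1 := by
    rw [mul_left_comm, mul_assoc]
    exact inv_mul_le_one_of_le₀ (by linarith) (Nat.cast_nonneg _)
  have key := quarter_add_le_one (by exact_mod_cast hd) (by positivity) hu
  rw [← Rat.cast_le (K := ℝ)]
  push_cast
  exact key

section CoordBounded

variable {R : Type*} [CommRing R] [LinearOrder R] {c₁ c₂ c₃ : R}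

def CoordBounded (M : R) (x : ℍ[R, c₁, c₂, c₃]) : Prop :=
  |x.re| ≤ M ∧ |x.imI| ≤ M ∧ |x.imJ| ≤ M ∧ |x.imK| ≤ M

theorem coordBounded_max (x : ℍ[R, c₁, c₂, c₃]) :
    CoordBounded (max (max |x.re| |x.imI|) (max |x.imJ| |x.imK|)) x := by
  refine ⟨?_, ?_, ?_, ?_⟩ <;> simp

theorem CoordBounded.mono {M N : R} {x : ℍ[R, c₁, c₂, c₃]} (hx : CoordBounded M x) (h : M ≤ N) :
    CoordBounded N x :=
  ⟨hx.1.trans h, hx.2.1.trans h, hx.2.2.1.trans h, hx.2.2.2.trans h⟩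

variable [IsStrictOrderedRing R]

theorem abs_add_mul_add_mul_add_mul_lt {e e₁ e₂ e₃ m₁ m₂ m₃ t M : R} (hM : 0 < M)
    (h₁ : |e₁| < t) (h₂ : |e₂| < t) (h₃ : |e₃| < t)
    (hm₁ : |m₁| ≤ M) (hm₂ : |m₂| ≤ M) (hm₃ : |m₃| ≤ M) :
    |e + e₁ * m₁ + e₂ * m₂ + e₃ * m₃| < |e| + 3 * (t * M) := by
  have term_lt {y m : R} (hy : |y| < t) (hm : |m| ≤ M) : |y * m| < t * M := by
    rw [abs_mul]
    exact mul_lt_mul_of_lt_of_le_of_nonneg_of_pos hy hm (abs_nonneg _) hM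
  linarith [abs_add_le (e + e₁ * m₁ + e₂ * m₂) (e₃ * m₃), abs_add_le (e + e₁ * m₁) (e₂ * m₂),
    abs_add_le e (e₁ * m₁), term_lt h₁ hm₁, term_lt h₂ hm₂, term_lt h₃ hm₃]

theorem abs_coords_lt {e₀ e₁ e₂ e₃ t M : R} {v₁ v₂ v₃ x : ℍ[R, c₁, c₂, c₃]}
    (hx : x = (e₀ : ℍ[R, c₁, c₂, c₃]) + e₁ • v₁ + e₂ • v₂ + e₃ • v₃)
    (hM : 0 < M) (h₁ : |e₁| < t) (h₂ : |e₂| < t) (h₃ : |e₃| < t)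
    (hv₁ : CoordBounded M v₁) (hv₂ : CoordBounded M v₂) (hv₃ : CoordBounded M v₃) :
    |x.re| < |e₀| + 3 * (t * M) ∧ |x.imI| < 3 * (t * M) ∧ |x.imJ| < 3 * (t * M) ∧
      |x.imK| < 3 * (t * M) := by
  subst hx
  refine ⟨?_, ?_, ?_, ?_⟩
  · simpa using abs_add_mul_add_mul_add_mul_lt (e := e₀) hM h₁ h₂ h₃ hv₁.1 hv₂.1 hv₃.1
  · simpa using abs_add_mul_add_mul_add_mul_lt (e := 0) hM h₁ h₂ h₃ hv₁.2.1 hv₂.2.1 hv₃.2.1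
  · simpa using abs_add_mul_add_mul_add_mul_lt (e := 0) hM h₁ h₂ h₃ hv₁.2.2.1 hv₂.2.2.1 hv₃.2.2.1
  · simpa using abs_add_mul_add_mul_add_mul_lt (e := 0) hM h₁ h₂ h₃ hv₁.2.2.2 hv₂.2.2.2 hv₃.2.2.2

end CoordBounded

theorem stmt_12 (a b : ℚ) (ha : 0 < a) (hb : 0 < b)
    (v₁ v₂ v₃ : ℍ[ℚ, -a, -b])
    (M : ℚ)
    (hM : M =
      max (max (max (max |v₁.re| |v₁.imI|) (max |v₁.imJ| |v₁.imK|))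
               (max (max |v₂.re| |v₂.imI|) (max |v₂.imJ| |v₂.imK|)))
          (max (max |v₃.re| |v₃.imI|) (max |v₃.imJ| |v₃.imK|)))
    (d : ℚ) (hd : d = (1 + a) * (1 + b))
    (Q : ℕ) (hQ : Q = ⌈2 * (M : ℝ) * (1 + Real.sqrt (1 + 3 * (d : ℝ)))⌉₊)
    (p : ℚ) (hp : 0 < p)
    (d₀ d₁ d₂ d₃ : ℤ)
    (h₀ : |(d₀ : ℚ)| ≤ p / 2)
    (h₁ : |(d₁ : ℚ)| < p / Q) (h₂ : |(d₂ : ℚ)| < p / Q) (h₃ : |(d₃ : ℚ)| < p / Q)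
    (δ : ℍ[ℚ, -a, -b])
    (hδ : δ = (d₀ : ℍ[ℚ, -a, -b]) + d₁ • v₁ + d₂ • v₂ + d₃ • v₃) :
    qN a b (p⁻¹ • δ) < 1 := by
  have hv₁ : CoordBounded M v₁ := (coordBounded_max v₁).mono (by rw [hM]; simp)
  have hv₂ : CoordBounded M v₂ := (coordBounded_max v₂).mono (by rw [hM]; simp)
  have hv₃ : CoordBounded M v₃ := (coordBounded_max v₃).mono (by rw [hM]; simp)
  have hQ0 : (0 : ℚ) < Q := by
    by_contra! h
    linarith [abs_nonneg (d₁ : ℚ), div_nonpos_of_nonneg_of_nonpos hp.le h]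
  have hM0 : 0 < M := by
    -- `M = 0` would force `Q = ⌈0⌉₊ = 0`
    refine (abs_nonneg _).trans hv₁.1 |>.lt_of_ne fun h => ?_
    simp [hQ, ← h] at hQ0
  have scale {z : ℚ} (hz : |z| < p / Q) : |p⁻¹ * z| < (Q : ℚ)⁻¹ := by
    rw [abs_mul, abs_inv, abs_of_pos hp, inv_mul_lt_iff₀ hp]
    simpa [div_eq_mul_inv] using hz
  obtain ⟨hre, himI, himJ, himK⟩ := abs_coords_lt (x := p⁻¹ • δ) (e₀ := p⁻¹ * d₀) (e₁ := p⁻¹ * d₁)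
    (e₂ := p⁻¹ * d₂) (e₃ := p⁻¹ * d₃) (by subst hδ; ext <;> simp <;> ring) hM0
    (scale h₁) (scale h₂) (scale h₃) hv₁ hv₂ hv₃
  have hre' : |(p⁻¹ • δ).re| < 1 / 2 + 3 * ((Q : ℚ)⁻¹ * M) := by
    refine hre.trans_le (add_le_add_left ?_ _)
    rw [abs_mul, abs_inv, abs_of_pos hp, inv_mul_le_iff₀ hp]
    linarith
  have hu := quarter_add_le_one_of_le_natCast hM0.le (hd ▸ mul_nonneg (by linarith) (by linarith))
    (hQ ▸ Nat.le_ceil _)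
  calc qN a b (p⁻¹ • δ) < _ := qN_lt_of_abs_coords_lt ha hb hre' himI himJ himK
    _ ≤ 1 := hd ▸ hu
end

section
/- The subset H = ℤ·1 + ℤ·(1+i)/2 + ℤ·(i+k)/7 + ℤ·(7+i+7j+k)/14 of the quaternion algebra (−7,−13/ℚ) is closed under multiplication, hence is an order. -/
open Quaternion

/-- The order `ℤ·1 + ℤ·(1+i)/2 + ℤ·(i+k)/7 + ℤ·(7+i+7j+k)/14` in `(−7,−13/ℚ)`. -/
def H713 : Set ℍ[ℚ, -7, -13] :=
  {x | ∃ n₀ n₁ n₂ n₃ : ℤ, x = (n₀ : ℍ[ℚ, -7, -13])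
      + n₁ • ((2 : ℚ)⁻¹ • ((1 : ℍ[ℚ, -7, -13]) + ⟨0, 1, 0, 0⟩))
      + n₂ • ((7 : ℚ)⁻¹ • ((⟨0, 1, 0, 0⟩ : ℍ[ℚ, -7, -13]) + ⟨0, 0, 0, 1⟩))
      + n₃ • ((14 : ℚ)⁻¹ • ((7 : ℍ[ℚ, -7, -13]) + ⟨0, 1, 0, 0⟩
          + (7 : ℚ) • (⟨0, 0, 1, 0⟩ : ℍ[ℚ, -7, -13]) + ⟨0, 0, 0, 1⟩))}

namespace H713

/-- `ofCoords a b c d = a·1 + b·(1+i)/2 + c·(i+k)/7 + d·(7+i+7j+k)/14`, written in the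
standard basis `1, i, j, k`. -/
def ofCoords (a b c d : ℤ) : ℍ[ℚ, -7, -13] :=
  ⟨a + b / 2 + d / 2, b / 2 + c / 7 + d / 14, d / 2, c / 7 + d / 14⟩

theorem mem_iff {x : ℍ[ℚ, -7, -13]} : x ∈ H713 ↔ ∃ a b c d : ℤ, x = ofCoords a b c d := by
  have h7 : (7 : ℍ[ℚ, -7, -13]) = ⟨7, 0, 0, 0⟩ := rfl
  refine exists₄_congr fun a b c d => Eq.congr_right ?_
  ext <;> simp [ofCoords, h7] <;> ring

/-- The structure constants of the basis are integers: coordinates multiply by integer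
bilinear forms. -/
theorem ofCoords_mul_ofCoords (a b c d p q r s : ℤ) :
    ofCoords a b c d * ofCoords p q r s =
      ofCoords (a*p - 2*b*q - c*q - 2*c*r - d*q - 2*d*r - 4*d*s)
        (a*q + b*p + b*q - 2*c*s + d*q + 2*d*r)
        (a*r + b*r + 2*b*s + c*p + c*s - 2*d*q)
        (a*s - b*r + c*q + d*p + d*q + d*s) := by
  ext <;>
    simp only [ofCoords, QuaternionAlgebra.re_mul, QuaternionAlgebra.imI_mul,
      QuaternionAlgebra.imJ_mul, QuaternionAlgebra.imK_mul] <;>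
    push_cast <;> ring

end H713

theorem stmt_17 : ∀ x ∈ H713, ∀ y ∈ H713, x * y ∈ H713 := by
  intro x hx y hy
  obtain ⟨a, b, c, d, rfl⟩ := H713.mem_iff.mp hx
  obtain ⟨p, q, r, s, rfl⟩ := H713.mem_iff.mp hy
  exact H713.mem_iff.mpr ⟨_, _, _, _, H713.ofCoords_mul_ofCoords a b c d p q r s⟩
end
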